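/- Let m, g, ρ, S, δ, W₀, C_L, C_{D0}, K be positive real constants. On the open set U = {(x,y,z,V,γ,ψ,φ) ∈ ℝ⁷ : V > 0 and cos γ ≠ 0}, let f be the dynamic soaring drift vector field f = ( V cos γ cos ψ, V cos γ sin ψ − W(z), V sin γ, (−D(V) − m g sin γ + m Ẇ cos γ sin ψ)/m, (L(V) cos φ − m g cos γ − m Ẇ sin γ sin ψ)/(m V), (L(V) sin φ + m Ẇ cos ψ)/(m V cos γ), 0 ) with L(V) = ½ρV²S C_L, D(V) = ½ρV²S(C_{D0}+K C_L²), W(z) = W₀/(1+e^{−z/δ}), Ẇ = W₀e^{−z/δ}V sin γ/(δ(1+e^{−z/δ})²), and let b = (0,0,0,0,0,0,1). Then the first three components of the iterated Lie bracket [f,[f,b]] at every point of U are: (L(V)/m)(cos ψ sin γ sin φ − cos φ sin ψ), (L(V)/m)(cos φ cos ψ + sin γ sin φ sin ψ), and −(L(V)/m) cos γ sin φ; in particular the position part of [f,[f,b]] does not vanish whenever L(V) ≠ 0. -/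

import Mathlib

/-- The dynamic soaring drift vector field on the state
`p = (x, y, z, V, γ, ψ, φ) ∈ ℝ⁷`, with lift `L(V) = ½ρV²S C_L`,
drag `D(V) = ½ρV²S(C_{D0}+K C_L²)`, logistic wind `W(z) = W₀/(1+e^{−z/δ})`
and wind gradient `Ẇ = W₀ e^{−z/δ} V sin γ/(δ(1+e^{−z/δ})²)`. -/
noncomputable def dsDrift (m g ρ S δ W₀ CL CD0 K : ℝ) (p : Fin 7 → ℝ) : Fin 7 → ℝ :=
  ![p 3 * Real.cos (p 4) * Real.cos (p 5),
    p 3 * Real.cos (p 4) * Real.sin (p 5) - W₀ / (1 + Real.exp (-(p 2) / δ)),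
    p 3 * Real.sin (p 4),
    (-(1 / 2 * ρ * (p 3) ^ 2 * S * (CD0 + K * CL ^ 2)) - m * g * Real.sin (p 4)
        + m * (W₀ * Real.exp (-(p 2) / δ) * p 3 * Real.sin (p 4)
            / (δ * (1 + Real.exp (-(p 2) / δ)) ^ 2)) * Real.cos (p 4) * Real.sin (p 5)) / m,
    (1 / 2 * ρ * (p 3) ^ 2 * S * CL * Real.cos (p 6) - m * g * Real.cos (p 4)
        - m * (W₀ * Real.exp (-(p 2) / δ) * p 3 * Real.sin (p 4)
            / (δ * (1 + Real.exp (-(p 2) / δ)) ^ 2)) * Real.sin (p 4) * Real.sin (p 5))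
      / (m * p 3),
    (1 / 2 * ρ * (p 3) ^ 2 * S * CL * Real.sin (p 6)
        + m * (W₀ * Real.exp (-(p 2) / δ) * p 3 * Real.sin (p 4)
            / (δ * (1 + Real.exp (-(p 2) / δ)) ^ 2)) * Real.cos (p 5))
      / (m * p 3 * Real.cos (p 4)),
    0]

/-! The drift depends on the roll angle `φ` only through the lift terms of `γ̇` and `ψ̇`, so
`[f, b] = -∂f/∂φ` only has `γ`- and `ψ`-components. Hence the position part of `[f, [f, b]]`
is minus the derivative of the ground velocity `V (cos γ cos ψ, cos γ sin ψ, sin γ)` (the wind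
does not depend on the angles) in the direction `[f, b]`. That is `L/m` times a column of the
rotation matrix with Euler angles `(ψ, γ, φ)`, a unit vector. -/

open Function Real

section General

variable {𝕜 : Type*} [NontriviallyNormedField 𝕜] {E : Type*} [NormedAddCommGroup E]
  [NormedSpace 𝕜 E] {F : Type*} [NormedAddCommGroup F] [NormedSpace 𝕜 F]

theorem VectorField.lieBracket_const_right (V : E → E) (w x : E) :
    VectorField.lieBracket 𝕜 V (fun _ => w) x = -fderiv 𝕜 V x w := by
  simp [VectorField.lieBracket_eq]

theorem fderiv_single_eq_of_hasDerivAt_update {ι : Type*} [Fintype ι] [DecidableEq ι]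
    {f : (ι → 𝕜) → F} {x : ι → 𝕜} {i : ι} {f' : F} (hf : DifferentiableAt 𝕜 f x)
    (h : HasDerivAt (fun t => f (update x i t)) f' (x i)) :
    fderiv 𝕜 f x (Pi.single i 1) = f' := by
  rw [← update_eq_self i x] at hf ⊢
  exact (hf.hasFDerivAt.comp_hasDerivAt (x i) (hasDerivAt_update x i (x i))).unique h

theorem fderiv_apply_eq_zero_of_forall_apply_eq {ι : Type*} [Fintype ι] {W : E → ι → F}
    {i : ι} {c : F} (h : ∀ y, W y i = c) (x v : E) : fderiv 𝕜 W x v i = 0 := by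
  by_cases hW : DifferentiableAt 𝕜 W x
  · have hcomp := fderiv_apply hW i
    simp only [h, fderiv_const_apply] at hcomp
    exact (DFunLike.congr_fun hcomp v).symm
  · simp [fderiv_zero_of_not_differentiableAt hW]

theorem VectorField.lieBracket_apply_of_forall_apply_eq {ι : Type*} [Fintype ι]
    {V W : (ι → F) → ι → F} {x : ι → F} {i : ι} {c : F} (hV : DifferentiableAt 𝕜 V x)
    (hW : ∀ y, W y i = c) :
    VectorField.lieBracket 𝕜 V W x i = -fderiv 𝕜 (fun y => V y i) x (W x) := by
  simp only [VectorField.lieBracket_eq, Pi.sub_apply, fderiv_apply_eq_zero_of_forall_apply_eq hW,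
    fderiv_apply hV, zero_sub, ContinuousLinearMap.comp_apply, ContinuousLinearMap.proj_apply]

end General

theorem euler_column_sq_add_sq_add_sq (γ ψ φ : ℝ) :
    (cos ψ * sin γ * sin φ - cos φ * sin ψ) ^ 2 + (cos φ * cos ψ + sin γ * sin φ * sin ψ) ^ 2
      + (cos γ * sin φ) ^ 2 = 1 := by
  linear_combination (sin φ ^ 2 * sin γ ^ 2 + cos φ ^ 2) * sin_sq_add_cos_sq ψ
    + sin φ ^ 2 * sin_sq_add_cos_sq γ + sin_sq_add_cos_sq φ

theorem vecCons_three_ne_zero {a b c : ℝ} (h : a ^ 2 + b ^ 2 + c ^ 2 ≠ 0) :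
    (![a, b, c] : Fin 3 → ℝ) ≠ 0 := by
  intro hz
  have ha : a = 0 := congrFun hz 0
  have hb : b = 0 := congrFun hz 1
  have hc : c = 0 := congrFun hz 2
  simp [ha, hb, hc] at h

theorem euler_column_smul_ne_zero {k : ℝ} (hk : k ≠ 0) (γ ψ φ : ℝ) :
    (![k * (cos ψ * sin γ * sin φ - cos φ * sin ψ), k * (cos φ * cos ψ + sin γ * sin φ * sin ψ),
      -k * cos γ * sin φ] : Fin 3 → ℝ) ≠ 0 := by
  refine vecCons_three_ne_zero fun hsum => pow_ne_zero 2 hk ?_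
  linear_combination hsum - k ^ 2 * euler_column_sq_add_sq_add_sq γ ψ φ

noncomputable section DynamicSoaring

variable {m g ρ S δ W₀ CL CD0 K : ℝ}

def dsDomain : Set (Fin 7 → ℝ) := {x | x 3 ≠ 0 ∧ cos (x 4) ≠ 0}

theorem isOpen_dsDomain : IsOpen dsDomain :=
  (isOpen_ne_fun (continuous_apply 3) continuous_const).inter
    (isOpen_ne_fun (continuous_cos.comp (continuous_apply 4)) continuous_const)

theorem differentiableAt_dsDrift {x : Fin 7 → ℝ} (hx : x ∈ dsDomain) :
    DifferentiableAt ℝ (dsDrift m g ρ S δ W₀ CL CD0 K) x := by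
  obtain ⟨hV, hγ⟩ := hx
  rw [differentiableAt_pi]
  intro i
  fin_cases i <;>
    simp only [dsDrift, div_eq_mul_inv, mul_inv_rev, Fin.zero_eta, Fin.mk_one, Fin.reduceFinMk,
      Matrix.cons_val_zero, Matrix.cons_val_one, Matrix.cons_val] <;>
    fun_prop (disch := first | assumption | positivity)

def dsRollBracket (m ρ S CL : ℝ) (x : Fin 7 → ℝ) : Fin 7 → ℝ :=
  ![0, 0, 0, 0,
    1 / 2 * ρ * x 3 ^ 2 * S * CL * sin (x 6) / (m * x 3),
    -(1 / 2 * ρ * x 3 ^ 2 * S * CL * cos (x 6)) / (m * x 3 * cos (x 4)),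
    0]

theorem hasDerivAt_dsDrift_update_roll (x : Fin 7 → ℝ) :
    HasDerivAt (fun t => dsDrift m g ρ S δ W₀ CL CD0 K (update x 6 t))
      (-dsRollBracket m ρ S CL x) (x 6) := by
  rw [hasDerivAt_pi]
  intro i
  fin_cases i <;>
    simp only [dsDrift, dsRollBracket, Pi.neg_apply, update_self, ne_eq, Fin.reduceEq,
      not_false_eq_true, update_of_ne, Fin.zero_eta, Fin.mk_one, Fin.reduceFinMk,
      Matrix.cons_val_zero, Matrix.cons_val_one, Matrix.cons_val, neg_zero]
  any_goals exact hasDerivAt_const _ _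
  · refine ((((hasDerivAt_cos _).const_mul _).sub_const _).sub_const _ |>.div_const _).congr_deriv ?_
    ring
  · refine ((((hasDerivAt_sin _).const_mul _).add_const _).div_const _).congr_deriv ?_
    ring

theorem lieBracket_dsDrift_roll {x : Fin 7 → ℝ} (hx : x ∈ dsDomain) :
    VectorField.lieBracket ℝ (dsDrift m g ρ S δ W₀ CL CD0 K)
      (fun _ => ![0, 0, 0, 0, 0, 0, 1]) x = dsRollBracket m ρ S CL x := by
  have hb : (![0, 0, 0, 0, 0, 0, 1] : Fin 7 → ℝ) = Pi.single 6 1 := by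
    ext i; fin_cases i <;> rfl
  rw [hb, VectorField.lieBracket_const_right, fderiv_single_eq_of_hasDerivAt_update
    (differentiableAt_dsDrift hx) (hasDerivAt_dsDrift_update_roll x), neg_neg]

theorem fderiv_dsDrift_apply_zero (x v : Fin 7 → ℝ) :
    fderiv ℝ (fun y => dsDrift m g ρ S δ W₀ CL CD0 K y 0) x v
      = -x 3 * (sin (x 4) * cos (x 5) * v 4 + cos (x 4) * sin (x 5) * v 5)
        + v 3 * cos (x 4) * cos (x 5) := by
  have h : HasFDerivAt (fun y : Fin 7 → ℝ => y 3 * cos (y 4) * cos (y 5)) _ x :=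
    ((hasFDerivAt_apply 3 x).mul (hasFDerivAt_apply 4 x).cos).mul (hasFDerivAt_apply 5 x).cos
  simp only [dsDrift, Matrix.cons_val_zero]
  rw [h.fderiv]
  simp only [Pi.mul_apply, smul_add, add_apply, smul_apply, ContinuousLinearMap.proj_apply,
    smul_eq_mul]
  ring

theorem fderiv_dsDrift_apply_one (x : Fin 7 → ℝ) {v : Fin 7 → ℝ} (hv : v 2 = 0) :
    fderiv ℝ (fun y => dsDrift m g ρ S δ W₀ CL CD0 K y 1) x v
      = x 3 * (cos (x 4) * cos (x 5) * v 5 - sin (x 4) * sin (x 5) * v 4)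
        + v 3 * cos (x 4) * sin (x 5) := by
  have hwind : DifferentiableAt ℝ (fun z => W₀ / (1 + exp (-z / δ))) (x 2) := by
    fun_prop (disch := positivity)
  have h : HasFDerivAt
      (fun y : Fin 7 → ℝ => y 3 * cos (y 4) * sin (y 5) - W₀ / (1 + exp (-y 2 / δ))) _ x :=
    (((hasFDerivAt_apply 3 x).mul (hasFDerivAt_apply 4 x).cos).mul (hasFDerivAt_apply 5 x).sin).sub
      (hwind.hasDerivAt.comp_hasFDerivAt (f := fun y : Fin 7 → ℝ => y 2) x (hasFDerivAt_apply 2 x))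
  simp only [dsDrift, Matrix.cons_val_one, Matrix.cons_val_zero]
  rw [h.fderiv]
  simp only [Pi.mul_apply, smul_add, sub_apply, add_apply, smul_apply,
    ContinuousLinearMap.proj_apply, smul_eq_mul, hv, mul_zero, sub_zero]
  ring

theorem fderiv_dsDrift_apply_two (x v : Fin 7 → ℝ) :
    fderiv ℝ (fun y => dsDrift m g ρ S δ W₀ CL CD0 K y 2) x v
      = x 3 * cos (x 4) * v 4 + v 3 * sin (x 4) := by
  have h : HasFDerivAt (fun y : Fin 7 → ℝ => y 3 * sin (y 4)) _ x :=
    (hasFDerivAt_apply 3 x).mul (hasFDerivAt_apply 4 x).sin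
  simp only [dsDrift, Matrix.cons_val]
  rw [h.fderiv]
  simp only [add_apply, smul_apply, ContinuousLinearMap.proj_apply, smul_eq_mul]
  ring

theorem lieBracket_dsDrift_dsRollBracket_position (hm : m ≠ 0) {p : Fin 7 → ℝ}
    (hp : p ∈ dsDomain) :
    VectorField.lieBracket ℝ (dsDrift m g ρ S δ W₀ CL CD0 K) (dsRollBracket m ρ S CL) p 0
        = (1 / 2 * ρ * p 3 ^ 2 * S * CL / m)
          * (cos (p 5) * sin (p 4) * sin (p 6) - cos (p 6) * sin (p 5)) ∧
      VectorField.lieBracket ℝ (dsDrift m g ρ S δ W₀ CL CD0 K) (dsRollBracket m ρ S CL) p 1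
        = (1 / 2 * ρ * p 3 ^ 2 * S * CL / m)
          * (cos (p 6) * cos (p 5) + sin (p 4) * sin (p 6) * sin (p 5)) ∧
      VectorField.lieBracket ℝ (dsDrift m g ρ S δ W₀ CL CD0 K) (dsRollBracket m ρ S CL) p 2
        = -(1 / 2 * ρ * p 3 ^ 2 * S * CL / m) * cos (p 4) * sin (p 6) := by
  have hf : DifferentiableAt ℝ (dsDrift m g ρ S δ W₀ CL CD0 K) p := differentiableAt_dsDrift hp
  obtain ⟨hV, hγ⟩ := hp
  rw [VectorField.lieBracket_apply_of_forall_apply_eq hf (i := 0) (c := 0) fun _ => rfl,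
    VectorField.lieBracket_apply_of_forall_apply_eq hf (i := 1) (c := 0) fun _ => rfl,
    VectorField.lieBracket_apply_of_forall_apply_eq hf (i := 2) (c := 0) fun _ => rfl,
    fderiv_dsDrift_apply_zero, fderiv_dsDrift_apply_one p rfl, fderiv_dsDrift_apply_two]
  simp only [dsRollBracket, Matrix.cons_val]
  refine ⟨?_, ?_, ?_⟩ <;> field_simp <;> ring

end DynamicSoaring

theorem ds_lieBracket_ffb_general (m g ρ S δ W₀ CL CD0 K : ℝ)
    (hm : 0 < m)
    (p : Fin 7 → ℝ) (hV : 0 < p 3) (hγ : Real.cos (p 4) ≠ 0) :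
    (VectorField.lieBracket ℝ (dsDrift m g ρ S δ W₀ CL CD0 K)
        (VectorField.lieBracket ℝ (dsDrift m g ρ S δ W₀ CL CD0 K)
          (fun _ : Fin 7 → ℝ => ![0, 0, 0, 0, 0, 0, 1])) p 0
      = (1 / 2 * ρ * (p 3) ^ 2 * S * CL / m)
          * (Real.cos (p 5) * Real.sin (p 4) * Real.sin (p 6)
              - Real.cos (p 6) * Real.sin (p 5))) ∧
    (VectorField.lieBracket ℝ (dsDrift m g ρ S δ W₀ CL CD0 K)
        (VectorField.lieBracket ℝ (dsDrift m g ρ S δ W₀ CL CD0 K)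
          (fun _ : Fin 7 → ℝ => ![0, 0, 0, 0, 0, 0, 1])) p 1
      = (1 / 2 * ρ * (p 3) ^ 2 * S * CL / m)
          * (Real.cos (p 6) * Real.cos (p 5)
              + Real.sin (p 4) * Real.sin (p 6) * Real.sin (p 5))) ∧
    (VectorField.lieBracket ℝ (dsDrift m g ρ S δ W₀ CL CD0 K)
        (VectorField.lieBracket ℝ (dsDrift m g ρ S δ W₀ CL CD0 K)
          (fun _ : Fin 7 → ℝ => ![0, 0, 0, 0, 0, 0, 1])) p 2
      = -(1 / 2 * ρ * (p 3) ^ 2 * S * CL / m) * Real.cos (p 4) * Real.sin (p 6)) ∧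
    (1 / 2 * ρ * (p 3) ^ 2 * S * CL ≠ 0 →
      (![VectorField.lieBracket ℝ (dsDrift m g ρ S δ W₀ CL CD0 K)
            (VectorField.lieBracket ℝ (dsDrift m g ρ S δ W₀ CL CD0 K)
              (fun _ : Fin 7 → ℝ => ![0, 0, 0, 0, 0, 0, 1])) p 0,
          VectorField.lieBracket ℝ (dsDrift m g ρ S δ W₀ CL CD0 K)
            (VectorField.lieBracket ℝ (dsDrift m g ρ S δ W₀ CL CD0 K)
              (fun _ : Fin 7 → ℝ => ![0, 0, 0, 0, 0, 0, 1])) p 1,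
          VectorField.lieBracket ℝ (dsDrift m g ρ S δ W₀ CL CD0 K)
            (VectorField.lieBracket ℝ (dsDrift m g ρ S δ W₀ CL CD0 K)
              (fun _ : Fin 7 → ℝ => ![0, 0, 0, 0, 0, 0, 1])) p 2] : Fin 3 → ℝ) ≠ 0) := by
  have hp : p ∈ dsDomain := ⟨hV.ne', hγ⟩
  have hinner : VectorField.lieBracket ℝ (dsDrift m g ρ S δ W₀ CL CD0 K)
      (fun _ => ![0, 0, 0, 0, 0, 0, 1]) =ᶠ[nhds p] dsRollBracket m ρ S CL :=
    Filter.eventually_of_mem (isOpen_dsDomain.mem_nhds hp)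
      fun x hx => lieBracket_dsDrift_roll hx
  obtain ⟨h0, h1, h2⟩ := lieBracket_dsDrift_dsRollBracket_position (g := g) (W₀ := W₀)
    (CD0 := CD0) (K := K) hm.ne' hp
  rw [Filter.EventuallyEq.rfl.lieBracket_vectorField_eq hinner, h0, h1, h2]
  exact ⟨rfl, rfl, rfl, fun hL => euler_column_smul_ne_zero (div_ne_zero hL hm.ne') _ _ _⟩

/-- On the open set `{V > 0, cos γ ≠ 0}`, the first three (position) components of the
iterated Lie bracket `[f,[f,b]]` of the dynamic soaring drift `f` and roll control field
`b = e₇` are `(L/m)(cos ψ sin γ sin φ − cos φ sin ψ)`,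
`(L/m)(cos φ cos ψ + sin γ sin φ sin ψ)` and `−(L/m) cos γ sin φ`; in particular the
position part of `[f,[f,b]]` does not vanish whenever `L(V) ≠ 0`. -/
theorem ds_lieBracket_ffb (m g ρ S δ W₀ CL CD0 K : ℝ)
    (hm : 0 < m) (hg : 0 < g) (hρ : 0 < ρ) (hS : 0 < S) (hδ : 0 < δ)
    (hW₀ : 0 < W₀) (hCL : 0 < CL) (hCD0 : 0 < CD0) (hK : 0 < K)
    (p : Fin 7 → ℝ) (hV : 0 < p 3) (hγ : Real.cos (p 4) ≠ 0) :
    (VectorField.lieBracket ℝ (dsDrift m g ρ S δ W₀ CL CD0 K)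
        (VectorField.lieBracket ℝ (dsDrift m g ρ S δ W₀ CL CD0 K)
          (fun _ : Fin 7 → ℝ => ![0, 0, 0, 0, 0, 0, 1])) p 0
      = (1 / 2 * ρ * (p 3) ^ 2 * S * CL / m)
          * (Real.cos (p 5) * Real.sin (p 4) * Real.sin (p 6)
              - Real.cos (p 6) * Real.sin (p 5))) ∧
    (VectorField.lieBracket ℝ (dsDrift m g ρ S δ W₀ CL CD0 K)
        (VectorField.lieBracket ℝ (dsDrift m g ρ S δ W₀ CL CD0 K)
          (fun _ : Fin 7 → ℝ => ![0, 0, 0, 0, 0, 0, 1])) p 1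
      = (1 / 2 * ρ * (p 3) ^ 2 * S * CL / m)
          * (Real.cos (p 6) * Real.cos (p 5)
              + Real.sin (p 4) * Real.sin (p 6) * Real.sin (p 5))) ∧
    (VectorField.lieBracket ℝ (dsDrift m g ρ S δ W₀ CL CD0 K)
        (VectorField.lieBracket ℝ (dsDrift m g ρ S δ W₀ CL CD0 K)
          (fun _ : Fin 7 → ℝ => ![0, 0, 0, 0, 0, 0, 1])) p 2
      = -(1 / 2 * ρ * (p 3) ^ 2 * S * CL / m) * Real.cos (p 4) * Real.sin (p 6)) ∧
    (1 / 2 * ρ * (p 3) ^ 2 * S * CL ≠ 0 →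
      (![VectorField.lieBracket ℝ (dsDrift m g ρ S δ W₀ CL CD0 K)
            (VectorField.lieBracket ℝ (dsDrift m g ρ S δ W₀ CL CD0 K)
              (fun _ : Fin 7 → ℝ => ![0, 0, 0, 0, 0, 0, 1])) p 0,
          VectorField.lieBracket ℝ (dsDrift m g ρ S δ W₀ CL CD0 K)
            (VectorField.lieBracket ℝ (dsDrift m g ρ S δ W₀ CL CD0 K)
              (fun _ : Fin 7 → ℝ => ![0, 0, 0, 0, 0, 0, 1])) p 1,
          VectorField.lieBracket ℝ (dsDrift m g ρ S δ W₀ CL CD0 K)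
            (VectorField.lieBracket ℝ (dsDrift m g ρ S δ W₀ CL CD0 K)
              (fun _ : Fin 7 → ℝ => ![0, 0, 0, 0, 0, 0, 1])) p 2] : Fin 3 → ℝ) ≠ 0) :=
  ds_lieBracket_ffb_general m g ρ S δ W₀ CL CD0 K hm p hV hγ
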